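/- arXiv:1003.1691 — 2 statements merged into one kernel-verified Lean document; each statement's English description precedes it below -/
import Mathlib

section
/- Let α = (α_1,…,α_n) be a composition, let Δ_α be the 180-degree rotation of the fat staircase partition δ_α = (n^{α_n},…,1^{α_1}), let λ, μ be partitions and k ≥ 0 with λ_1 − μ_1 − k ≤ n, and let S(λ,μ,α;k) be the skew diagram obtained by placing λ/μ immediately below Δ_α so that the rows overlap in exactly λ_1 − μ_1 − k columns. If T is a semistandard Young tableau of shape S(λ,μ,α;k) with lattice reading word, then the entries in the first row of the foundation λ/μ all lie in the set R_{α,k} = {1 + Σ_{i=1}^{j} α_{n+1−i} : j = 1,…,n} ∪ ({1} if k > 0, else ∅); moreover the value 1 occurs at most k times in that row, and every other value occurs at most once. -/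
open Finset

/-- A diagram is a finite set of cells `(row, column)`. -/
abbrev Diagram := Finset (ℕ × ℕ)

def ht (D : Diagram) : ℕ := D.sup (fun c => c.1 + 1)
def wd (D : Diagram) : ℕ := D.sup (fun c => c.2 + 1)

/-- A semistandard Young tableau of shape `D` (entries are 0-based: the paper's
value `v` corresponds to the entry `v - 1`). -/
structure SSYT (D : Diagram) where
  entry : ℕ × ℕ → ℕ
  rowWeak : ∀ i j, (i, j) ∈ D → (i, j + 1) ∈ D → entry (i, j) ≤ entry (i, j + 1)
  colStrict : ∀ i j, (i, j) ∈ D → (i + 1, j) ∈ D → entry (i, j) < entry (i + 1, j)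
  zero_outside : ∀ c, c ∉ D → entry c = 0

/-- The content of a tableau: `content T v` is the number of cells with entry `v`. -/
noncomputable def content {D : Diagram} (T : SSYT D) : ℕ →₀ ℕ := ∑ c ∈ D, Finsupp.single (T.entry c) 1

/-- `c'` is read before (or equal to) `c` in the reading word:
rows top to bottom, each row right to left. -/
def ReadBefore (c' c : ℕ × ℕ) : Prop := c'.1 < c.1 ∨ (c'.1 = c.1 ∧ c.2 ≤ c'.2)

instance (c' c : ℕ × ℕ) : Decidable (ReadBefore c' c) := by
  unfold ReadBefore; infer_instance

/-- The reading word of `T` is lattice. -/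
def IsLattice {D : Diagram} (T : SSYT D) : Prop :=
  ∀ c ∈ D, ∀ v : ℕ,
    (D.filter (fun c' => ReadBefore c' c ∧ T.entry c' = v + 1)).card ≤
    (D.filter (fun c' => ReadBefore c' c ∧ T.entry c' = v)).card

/-- The skew Schur function of a diagram, as a power series in `x_0, x_1, …`:
the coefficient of the monomial with exponents `d` is the number of SSYT of
shape `D` and content `d`. -/
noncomputable def schurOf (D : Diagram) : MvPowerSeries ℕ ℤ :=
  fun d => (Nat.card {T : SSYT D // content T = d} : ℤ)

/-- Number of lattice SSYT of shape `D` and content `d`. -/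
noncomputable def lrCount (D : Diagram) (d : ℕ →₀ ℕ) : ℕ :=
  Nat.card {T : SSYT D // IsLattice T ∧ content T = d}

/-- Littlewood–Richardson coefficient `c^lam_{mu, d}` (Littlewood–Richardson rule). -/
noncomputable def lrCoeff (lam mu : YoungDiagram) (d : ℕ →₀ ℕ) : ℕ :=
  lrCount (lam.cells \ mu.cells) d

def diagramOfRows (L : List ℕ) : Diagram :=
  (Finset.range L.length).biUnion (fun i => (Finset.range (L.getD i 0)).image (fun j => (i, j)))

/-- The row lengths of the fat staircase `δ_α`. -/
def staircaseRows (α : List ℕ) : List ℕ :=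
  ((List.range α.length).reverse.map (fun i => List.replicate (α.getD i 0) (i + 1))).flatten

/-- The fat staircase `δ_α = (n^{α_n}, …, 1^{α_1})` for `α = (α_1, …, α_n)`. -/
def fatStaircase (α : List ℕ) : Diagram := diagramOfRows (staircaseRows α)

/-- 180 degree rotation of a diagram. -/
def rotD (D : Diagram) : Diagram :=
  D.image (fun c => (ht D - 1 - c.1, wd D - 1 - c.2))

/-- The sequence of row lengths of a diagram, as a finitely supported function. -/
noncomputable def rowContent (D : Diagram) : ℕ →₀ ℕ := ∑ c ∈ D, Finsupp.single c.1 1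

/-- A content (partition) `d` is a fat staircase. -/
def IsFatStaircase (d : ℕ →₀ ℕ) : Prop :=
  ∃ α : List ℕ, (∀ a ∈ α, 0 < a) ∧ d = rowContent (fatStaircase α)

/-- Every Schur function appearing in the expansion of `s_D` is indexed by a fat staircase. -/
def IsSumOfFatStaircases (D : Diagram) : Prop :=
  ∀ d, lrCount D d ≠ 0 → IsFatStaircase d

/-- Near-concatenation of depth `i`. -/
def nearConcat (i : ℕ) (D1 D2 : Diagram) : Diagram :=
  D1.image (fun c => (c.1 + (ht D2 - i), c.2)) ∪ D2.image (fun c => (c.1, c.2 + wd D1))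

/-- Direct sum of diagrams. -/
def directSum (D1 D2 : Diagram) : Diagram := nearConcat 0 D1 D2

/-- A single column of `l` boxes. -/
def colD (l : ℕ) : Diagram := (Finset.range l).image (fun i => (i, 0))

/-- A single row of `m` boxes. -/
def rowD (m : ℕ) : Diagram := (Finset.range m).image (fun j => (0, j))

def colLenAt (D : Diagram) (j : ℕ) : ℕ := (D.filter (fun c => c.2 = j)).card
noncomputable def leftCol (D : Diagram) : ℕ := sInf {j | ∃ i, (i, j) ∈ D}
noncomputable def blCol (D : Diagram) : ℕ := sInf {j | (ht D - 1, j) ∈ D}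
noncomputable def topRow (D : Diagram) : ℕ := sInf {i | ∃ j, (i, j) ∈ D}
noncomputable def tlCol (D : Diagram) : ℕ := sInf {j | (topRow D, j) ∈ D}
def lastRowLen (D : Diagram) : ℕ := (D.filter (fun c => c.1 = ht D - 1)).card

/-- `S(F, E; k)`: the foundation `F` is placed immediately below `E`, with the
first row of `F` beginning one box below and `k` boxes left of the bottom-left
box of `E`. -/
noncomputable def SDiagG (F E : Diagram) (k : ℕ) : Diagram :=
  E.image (fun c => (c.1, c.2 + tlCol F + k)) ∪
  F.image (fun c => (c.1 + ht E, c.2 + blCol E))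

/-- `S(λ, μ, E; k)` with foundation the skew diagram `λ/μ`. -/
noncomputable def SDiag (lam mu : YoungDiagram) (E : Diagram) (k : ℕ) : Diagram :=
  SDiagG (lam.cells \ mu.cells) E k

/-- The set `R_{α,k}` (values as in the paper, i.e. 1-based). -/
def Rset (α : List ℕ) (k : ℕ) : Set ℕ :=
  {v | ∃ j, 1 ≤ j ∧ j ≤ α.length ∧ v = 1 + (α.drop (α.length - j)).sum} ∪
  {v | v = 1 ∧ 0 < k}

def rectD (a b : ℕ) : Diagram := Finset.range a ×ˢ Finset.range b

/-- The complement `D^c` of `D` in the `a × b` rectangle: the 180 degree rotation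
of the set-theoretic complement of `D` in the rectangle. -/
def complD (a b : ℕ) (D : Diagram) : Diagram :=
  (rectD a b \ D).image (fun c => (a - 1 - c.1, b - 1 - c.2))

def IsSkewDiagram (D : Diagram) : Prop :=
  ∃ lam mu : YoungDiagram, mu ≤ lam ∧ D = lam.cells \ mu.cells

def diagramOfF (d : ℕ →₀ ℕ) : Diagram :=
  d.support.biUnion (fun i => (Finset.range (d i)).image (fun j => (i, j)))

/-- A symmetric function is Schur-positive when it is a nonnegative integer
combination of Schur functions of partitions. -/
def SchurPositive (f : MvPowerSeries ℕ ℤ) : Prop :=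
  ∃ (S : Finset (ℕ →₀ ℕ)) (a : (ℕ →₀ ℕ) → ℕ),
    (∀ d ∈ S, ∀ i, d (i + 1) ≤ d i) ∧
    f = ∑ d ∈ S, (a d : ℤ) • schurOf (diagramOfF d)

def AdjCell (c c' : ℕ × ℕ) : Prop :=
  (c.1 = c'.1 ∧ (c.2 + 1 = c'.2 ∨ c'.2 + 1 = c.2)) ∨
  (c.2 = c'.2 ∧ (c.1 + 1 = c'.1 ∨ c'.1 + 1 = c.1))

def ConnectedDiagram (D : Diagram) : Prop :=
  ∀ c ∈ D, ∀ c' ∈ D, Relation.ReflTransGen (fun a b => a ∈ D ∧ b ∈ D ∧ AdjCell a b) c c'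

/-!
In a lattice filling the rotated fat staircase `Δ_α` on top is forced: each of its columns, of
height `h`, reads `0, 1, …, h - 1` from top to bottom. Indeed, at the first cell (in reading
order) where this fails the entry is too large, and then it has been read more often than its
predecessor. Consequently, when the reading word reaches the first row of the foundation, every
value `w` has been read exactly as often as there are columns of height `> w`. The lattice
condition at a cell of that row carrying `v + 1` therefore needs a column of height exactly
`v + 1`, i.e. `v + 2 ∈ R_{α,k}`; as the column heights are distinct, there is at most one such
cell. An entry `0` is impossible below `Δ_α` by column strictness, so it sits in one of the `k`
columns to its left.
-/

lemma List.sum_drop_antitone (l : List ℕ) : Antitone fun i => (l.drop i).sum :=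
  fun _ _ h => (List.drop_sublist_drop_left l h).sum_le_sum fun _ _ => Nat.zero_le _

lemma List.sum_drop_succ_lt (l : List ℕ) (hl : ∀ a ∈ l, 0 < a) {i : ℕ} (hi : i < l.length) :
    (l.drop (i + 1)).sum < (l.drop i).sum := by
  rw [List.drop_eq_getElem_cons hi, List.sum_cons]
  have := hl l[i] (List.getElem_mem hi)
  omega

lemma mem_diagramOfRows {L : List ℕ} {i j : ℕ} :
    (i, j) ∈ diagramOfRows L ↔ i < L.length ∧ j < L.getD i 0 := by
  simp [diagramOfRows]

lemma staircaseRows_cons (a : ℕ) (α : List ℕ) :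
    staircaseRows (a :: α) = (staircaseRows α).map (· + 1) ++ List.replicate a 1 := by
  simp only [staircaseRows, List.length_cons, List.range_succ_eq_map, List.reverse_cons,
    List.map_append, List.flatten_append, ← List.map_reverse, List.map_map, List.map_flatten]
  simp [Function.comp_def, List.map_replicate]

lemma length_staircaseRows (α : List ℕ) : (staircaseRows α).length = α.sum := by
  induction α with
  | nil => rfl
  | cons a α ih => simp [staircaseRows_cons, ih, Nat.add_comm]

lemma getD_staircaseRows_cons (a : ℕ) (α : List ℕ) (i : ℕ) :
    (staircaseRows (a :: α)).getD i 0 =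
      if i < α.sum then (staircaseRows α).getD i 0 + 1 else if i < α.sum + a then 1 else 0 := by
  have := length_staircaseRows α
  rw [staircaseRows_cons]
  simp only [List.getD_eq_getElem?_getD, List.getElem?_append, List.getElem?_map,
    List.length_map, List.getElem?_replicate, length_staircaseRows]
  split_ifs <;> grind

lemma lt_getD_staircaseRows {α : List ℕ} {i j : ℕ} :
    j < (staircaseRows α).getD i 0 ↔ i < (α.drop j).sum := by
  induction α generalizing j with
  | nil => simp [staircaseRows]
  | cons a α ih =>
    rw [getD_staircaseRows_cons]
    cases j with
    | zero => simp only [List.drop_zero, List.sum_cons]; split_ifs <;> simp <;> omega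
    | succ j =>
      have hsum := List.sum_drop_antitone α (Nat.zero_le j)
      simp only [List.drop_zero, List.drop_succ_cons] at hsum ⊢
      split_ifs
      · rw [Nat.add_lt_add_iff_right, ih]
      all_goals omega

lemma mem_fatStaircase {α : List ℕ} {i j : ℕ} :
    (i, j) ∈ fatStaircase α ↔ i < (α.drop j).sum := by
  rw [fatStaircase, mem_diagramOfRows, lt_getD_staircaseRows, length_staircaseRows,
    and_iff_right_iff_imp]
  exact fun h => h.trans_le (List.sum_drop_antitone α (Nat.zero_le j))

lemma lt_ht_of_mem {D : Diagram} {c : ℕ × ℕ} (hc : c ∈ D) : c.1 < ht D :=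
  Finset.le_sup (f := fun c : ℕ × ℕ => c.1 + 1) hc

lemma lt_wd_of_mem {D : Diagram} {c : ℕ × ℕ} (hc : c ∈ D) : c.2 < wd D :=
  Finset.le_sup (f := fun c : ℕ × ℕ => c.2 + 1) hc

lemma ht_eq_of_lt {D : Diagram} {m : ℕ} (hlt : ∀ c ∈ D, c.1 < m)
    (hmem : 0 < m → ∃ j, (m - 1, j) ∈ D) : ht D = m := by
  refine le_antisymm (Finset.sup_le hlt) ?_
  rcases Nat.eq_zero_or_pos m with rfl | hm
  · exact Nat.zero_le _
  · obtain ⟨j, hj⟩ := hmem hm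
    have := lt_ht_of_mem hj
    omega

lemma wd_eq_of_lt {D : Diagram} {m : ℕ} (hlt : ∀ c ∈ D, c.2 < m)
    (hmem : 0 < m → ∃ i, (i, m - 1) ∈ D) : wd D = m := by
  refine le_antisymm (Finset.sup_le hlt) ?_
  rcases Nat.eq_zero_or_pos m with rfl | hm
  · exact Nat.zero_le _
  · obtain ⟨i, hi⟩ := hmem hm
    have := lt_wd_of_mem hi
    omega

lemma mem_rotD {D : Diagram} {r j : ℕ} :
    (r, j) ∈ rotD D ↔ r < ht D ∧ j < wd D ∧ (ht D - 1 - r, wd D - 1 - j) ∈ D := by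
  constructor
  · simp only [rotD, Finset.mem_image, Prod.mk.injEq]
    rintro ⟨c, hc, rfl, rfl⟩
    have h1 := lt_ht_of_mem hc
    have h2 := lt_wd_of_mem hc
    refine ⟨by omega, by omega, ?_⟩
    convert hc using 2 <;> omega
  · rintro ⟨hr, hj, hc⟩
    exact Finset.mem_image.mpr ⟨_, hc, by simp only [Prod.mk.injEq]; omega⟩

section FatStaircase

variable {α : List ℕ}

lemma ht_fatStaircase (α : List ℕ) : ht (fatStaircase α) = α.sum := by
  refine ht_eq_of_lt (fun ⟨i, j⟩ hc => ?_) (fun hm => ⟨0, ?_⟩)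
  · exact (mem_fatStaircase.mp hc).trans_le (List.sum_drop_antitone α (Nat.zero_le j))
  · rw [mem_fatStaircase, List.drop_zero]; omega

lemma wd_fatStaircase (hα : ∀ a ∈ α, 0 < a) : wd (fatStaircase α) = α.length := by
  refine wd_eq_of_lt (fun ⟨i, j⟩ hc => ?_) (fun hn => ⟨0, ?_⟩)
  · by_contra! hj
    simpa [List.drop_eq_nil_of_le hj] using mem_fatStaircase.mp hc
  · have := List.sum_drop_succ_lt α hα (i := α.length - 1) (by omega)
    rw [mem_fatStaircase]
    omega

/-- The height of the column `j` (counted from the left) of the rotated fat staircase `Δ_α`. -/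
def colHeight (α : List ℕ) (j : ℕ) : ℕ := (α.drop (α.length - (j + 1))).sum

lemma colHeight_mono (α : List ℕ) : Monotone (colHeight α) :=
  fun _ _ h => List.sum_drop_antitone α (by omega)

lemma colHeight_le_sum (α : List ℕ) (j : ℕ) : colHeight α j ≤ α.sum :=
  List.sum_drop_antitone α (Nat.zero_le _)

lemma colHeight_strictMonoOn (hα : ∀ a ∈ α, 0 < a) :
    StrictMonoOn (colHeight α) (Set.Iio α.length) := by
  intro i _ j hj hij
  rw [Set.mem_Iio] at hj
  have := List.sum_drop_succ_lt α hα (i := α.length - (j + 1)) (by omega)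
  exact (List.sum_drop_antitone α
    (show α.length - (j + 1) + 1 ≤ α.length - (i + 1) by omega)).trans_lt this

lemma colHeight_pos (hα : ∀ a ∈ α, 0 < a) {j : ℕ} (hj : j < α.length) :
    0 < colHeight α j :=
  (Nat.zero_le _).trans_lt (List.sum_drop_succ_lt α hα (i := α.length - (j + 1)) (by omega))

lemma mem_rotD_fatStaircase (hα : ∀ a ∈ α, 0 < a) {r j : ℕ} :
    (r, j) ∈ rotD (fatStaircase α) ↔
      r < α.sum ∧ j < α.length ∧ α.sum - r ≤ colHeight α j := by
  rw [mem_rotD, ht_fatStaircase, wd_fatStaircase hα, mem_fatStaircase, colHeight,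
    Nat.sub_sub α.length 1 j, Nat.add_comm 1 j]
  constructor <;> rintro ⟨h1, h2, h3⟩ <;> exact ⟨h1, h2, by omega⟩

lemma ht_rotD_fatStaircase (hα : ∀ a ∈ α, 0 < a) : ht (rotD (fatStaircase α)) = α.sum := by
  refine ht_eq_of_lt (fun ⟨r, j⟩ hc => ((mem_rotD_fatStaircase hα).mp hc).1)
    (fun hm => ⟨α.length - 1, ?_⟩)
  have hn : 0 < α.length := List.length_pos_iff.mpr (by rintro rfl; simp at hm)
  have : colHeight α (α.length - 1) = α.sum := by simp [colHeight, Nat.sub_add_cancel hn]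
  rw [mem_rotD_fatStaircase hα]
  omega

lemma blCol_rotD_fatStaircase (hα : ∀ a ∈ α, 0 < a) : blCol (rotD (fatStaircase α)) = 0 := by
  rw [blCol, Nat.sInf_eq_zero, ht_rotD_fatStaircase hα]
  rcases Nat.eq_zero_or_pos α.sum with h | h
  · exact Or.inr <| Set.eq_empty_of_forall_notMem fun j hj => by
      have := ((mem_rotD_fatStaircase hα).mp hj).1
      omega
  · have hn : 0 < α.length := List.length_pos_iff.mpr (by rintro rfl; simp at h)
    have := colHeight_pos hα hn
    refine Or.inl ((mem_rotD_fatStaircase hα).mpr ?_)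
    omega

end FatStaircase

section SkewShape

variable {F E : Diagram} {k r j : ℕ}

lemma mem_SDiagG_of_lt_ht (hr : r < ht E) :
    (r, j) ∈ SDiagG F E k ↔ tlCol F + k ≤ j ∧ (r, j - (tlCol F + k)) ∈ E := by
  simp only [SDiagG, Finset.mem_union, Finset.mem_image, Prod.mk.injEq]
  constructor
  · rintro (⟨c, hc, rfl, rfl⟩ | ⟨c, -, h1, -⟩)
    · exact ⟨by omega, by simpa [Nat.add_assoc] using hc⟩
    · omega
  · rintro ⟨hj, hc⟩
    exact Or.inl ⟨_, hc, rfl, by omega⟩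

lemma mem_SDiagG_ht :
    (ht E, j) ∈ SDiagG F E k ↔ blCol E ≤ j ∧ (0, j - blCol E) ∈ F := by
  simp only [SDiagG, Finset.mem_union, Finset.mem_image, Prod.mk.injEq]
  constructor
  · rintro (⟨c, hc, h1, -⟩ | ⟨⟨i, j⟩, hc, h1, rfl⟩)
    · have := lt_ht_of_mem hc
      omega
    · obtain rfl : i = 0 := by omega
      exact ⟨by omega, by simpa using hc⟩
  · rintro ⟨hj, hc⟩
    exact Or.inr ⟨_, hc, by simp, by omega⟩

variable {lam mu : YoungDiagram}

lemma mem_cells_sdiff {i : ℕ} :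
    (i, j) ∈ lam.cells \ mu.cells ↔ mu.rowLen i ≤ j ∧ j < lam.rowLen i := by
  rw [Finset.mem_sdiff, YoungDiagram.mem_cells, YoungDiagram.mem_cells,
    YoungDiagram.mem_iff_lt_rowLen, YoungDiagram.mem_iff_lt_rowLen, not_lt]
  exact and_comm

lemma tlCol_cells_sdiff (h0 : mu.rowLen 0 < lam.rowLen 0) :
    tlCol (lam.cells \ mu.cells) = mu.rowLen 0 := by
  have hmem : (0, mu.rowLen 0) ∈ lam.cells \ mu.cells := mem_cells_sdiff.mpr ⟨le_rfl, h0⟩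
  have htop : topRow (lam.cells \ mu.cells) = 0 :=
    Nat.sInf_eq_zero.mpr (Or.inl ⟨_, hmem⟩)
  rw [tlCol, htop]
  exact le_antisymm (Nat.sInf_le hmem)
    (le_csInf ⟨_, hmem⟩ fun j hj => (mem_cells_sdiff.mp hj).1)

end SkewShape

def ReadStrictlyBefore (c' c : ℕ × ℕ) : Prop := c'.1 < c.1 ∨ (c'.1 = c.1 ∧ c.2 < c'.2)

instance (c' c : ℕ × ℕ) : Decidable (ReadStrictlyBefore c' c) := by
  unfold ReadStrictlyBefore; infer_instance

lemma card_filter_readBefore {D : Diagram} {c : ℕ × ℕ} (hc : c ∈ D) (P : ℕ × ℕ → Prop)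
    [DecidablePred P] :
    #(D.filter fun c' => ReadBefore c' c ∧ P c') =
      #(D.filter fun c' => ReadStrictlyBefore c' c ∧ P c') + if P c then 1 else 0 := by
  have hiff : ∀ c', ReadBefore c' c ↔ ReadStrictlyBefore c' c ∨ c' = c := by
    rintro ⟨i, j⟩
    obtain ⟨i', j'⟩ := c
    simp only [ReadBefore, ReadStrictlyBefore, Prod.mk.injEq]
    omega
  split_ifs with hP
  · have hins : (D.filter fun c' => ReadBefore c' c ∧ P c') =
        insert c (D.filter fun c' => ReadStrictlyBefore c' c ∧ P c') := by
      ext c'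
      simp only [Finset.mem_filter, Finset.mem_insert, hiff]
      constructor
      · rintro ⟨hc', h | rfl, hPc'⟩ <;> simp_all
      · rintro (rfl | ⟨hc', h, hPc'⟩) <;> simp_all
    rw [hins, Finset.card_insert_of_notMem fun hmem => ?_]
    have := (Finset.mem_filter.mp hmem).2.1
    simp [ReadStrictlyBefore] at this
  · rw [Nat.add_zero]
    congr 1
    refine Finset.filter_congr fun c' _ => ?_
    rw [hiff]
    constructor
    · rintro ⟨h | rfl, hPc'⟩ <;> simp_all
    · exact fun ⟨h, hPc'⟩ => ⟨Or.inl h, hPc'⟩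

lemma card_filter_readBefore_eq_add (D : Diagram) (r j : ℕ) (P : ℕ × ℕ → Prop)
    [DecidablePred P] :
    #(D.filter fun c => ReadBefore c (r, j) ∧ P c) =
      #(D.filter fun c => c.1 < r ∧ P c) +
        #(D.filter fun c => c.1 = r ∧ j ≤ c.2 ∧ P c) := by
  rw [← Finset.card_union_of_disjoint]
  · rw [← Finset.filter_or]
    congr 1
    exact Finset.filter_congr fun c _ => by simp only [ReadBefore]; tauto
  · exact Finset.disjoint_filter.mpr fun c _ h1 h2 => by omega

lemma SSYT.entry_le_entry_of_row {D : Diagram} (T : SSYT D) {r j j' : ℕ} (hjj' : j ≤ j')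
    (hrow : ∀ i, j ≤ i → i ≤ j' → (r, i) ∈ D) : T.entry (r, j) ≤ T.entry (r, j') := by
  induction j', hjj' using Nat.le_induction with
  | base => exact le_rfl
  | succ j' hjj' ih =>
    exact (ih fun i h1 h2 => hrow i h1 (by omega)).trans
      (T.rowWeak r j' (hrow j' hjj' (by omega)) (hrow (j' + 1) (by omega) le_rfl))

/-- Above row `N`, the diagram `D` consists of `n` bottom-justified columns, the column `a + i`
having height `h i`. -/
def HasColumnsAbove (D : Diagram) (N a n : ℕ) (h : ℕ → ℕ) : Prop :=
  ∀ r j, r < N → ((r, j) ∈ D ↔ a ≤ j ∧ j < a + n ∧ N - r ≤ h (j - a))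

namespace HasColumnsAbove

variable {D : Diagram} {N a n : ℕ} {h : ℕ → ℕ}

/-- Where `T` is filled as in the lattice case, the entry `w` of the column `a + i` sits in
the cell `(N - h i + w, a + i)`. -/
lemma card_filter_entry_eq (hD : HasColumnsAbove D N a n h) (hle : ∀ i, h i ≤ N)
    (T : SSYT D) (Q : ℕ × ℕ → Prop) [DecidablePred Q]
    (hQ : ∀ c ∈ D, Q c → c.1 < N ∧ T.entry c + (N - c.1) = h (c.2 - a)) (w : ℕ) :
    #(D.filter fun c => Q c ∧ T.entry c = w) =
      #((Finset.range n).filter fun i => w < h i ∧ Q (N - h i + w, a + i)) := by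
  have hcell : ∀ i, i < n → w < h i → (N - h i + w, a + i) ∈ D := fun i hi hw => by
    have := hle i
    rw [hD _ _ (by omega)]
    simp only [Nat.add_sub_cancel_left]
    omega
  rw [← Finset.card_image_of_injOn (f := fun i => (N - h i + w, a + i))
    (fun i _ i' _ hii' => by simp only [Prod.mk.injEq] at hii'; omega)]
  congr 1
  ext ⟨r, j⟩
  simp only [Finset.mem_filter, Finset.mem_image, Finset.mem_range, Prod.mk.injEq]
  constructor
  · rintro ⟨hc, hQc, rfl⟩
    obtain ⟨hr, hforced⟩ := hQ _ hc hQc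
    dsimp only at hr hforced
    obtain ⟨h1, h2, h3⟩ := (hD r j hr).mp hc
    have := hle (j - a)
    refine ⟨j - a, ⟨by omega, by omega, ?_⟩, by omega, by omega⟩
    convert hQc using 2 <;> omega
  · rintro ⟨i, ⟨hi, hw, hQc⟩, rfl, rfl⟩
    have hc := hcell i hi hw
    have := (hQ _ hc hQc).2
    dsimp only at this
    rw [Nat.add_sub_cancel_left] at this
    have := hle i
    exact ⟨hc, hQc, by omega⟩

lemma filter_subset_of_entry_gt (hD : HasColumnsAbove D N a n h) (hh : Monotone h)
    (hle : ∀ i, h i ≤ N) (T : SSYT D) {r j e : ℕ} (hc : (r, j) ∈ D) (hr : r < N)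
    (hbefore : ∀ c ∈ D, ReadStrictlyBefore c (r, j) → T.entry c + (N - c.1) = h (c.2 - a))
    (he : T.entry (r, j) = e + 1) (hgt : h (j - a) ≤ e + (N - r)) :
    (Finset.range n).filter
        (fun i => e < h i ∧ ReadStrictlyBefore (N - h i + e, a + i) (r, j)) ⊆
      (Finset.range n).filter
        (fun i => e + 1 < h i ∧ ReadStrictlyBefore (N - h i + (e + 1), a + i) (r, j)) := by
  obtain ⟨hj, hjn, hcol⟩ := (hD r j hr).mp hc
  intro i hi
  rw [Finset.mem_filter, Finset.mem_range] at hi ⊢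
  obtain ⟨hin, hei, hrb⟩ := hi
  unfold ReadStrictlyBefore at hrb ⊢
  dsimp only at hrb ⊢
  have hhi := hle i
  rcases hrb with hrow | ⟨hrow, hji⟩
  · refine ⟨hin, by omega, ?_⟩
    by_contra! hcontra
    have : h i ≤ h (j - a) := hh (by omega)
    omega
  · -- the entry `e` of the column `a + i` would lie to the right of `(r, j)` in the same row
    exfalso
    have hcell : (r, a + i) ∈ D := by
      rw [hD r _ hr, Nat.add_sub_cancel_left]
      omega
    have hforced := hbefore _ hcell (Or.inr ⟨rfl, hji⟩)
    have hrowD : ∀ j', j ≤ j' → j' ≤ a + i → (r, j') ∈ D := fun j' h1 h2 => by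
      have : h (j - a) ≤ h (j' - a) := hh (by omega)
      rw [hD r j' hr]
      omega
    have := T.entry_le_entry_of_row hji.le hrowD
    dsimp only at hforced
    rw [Nat.add_sub_cancel_left] at hforced
    omega

end HasColumnsAbove

namespace IsLattice

variable {D : Diagram} {T : SSYT D} {N a n : ℕ} {h : ℕ → ℕ}

lemma entry_add_eq_of_before (hT : IsLattice T) (hD : HasColumnsAbove D N a n h)
    (hh : Monotone h) (hle : ∀ i, h i ≤ N) {r j : ℕ} (hc : (r, j) ∈ D) (hr : r < N)
    (hbefore : ∀ c ∈ D, ReadStrictlyBefore c (r, j) → T.entry c + (N - c.1) = h (c.2 - a)) :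
    T.entry (r, j) + (N - r) = h (j - a) := by
  obtain ⟨hj, hjn, hcol⟩ := (hD r j hr).mp hc
  have hQ : ∀ c ∈ D, ReadStrictlyBefore c (r, j) →
      c.1 < N ∧ T.entry c + (N - c.1) = h (c.2 - a) := fun c hc' hrb => by
    refine ⟨?_, hbefore c hc' hrb⟩
    unfold ReadStrictlyBefore at hrb
    omega
  apply le_antisymm
  · -- an entry `e + 1` beyond the forced value would be read more often than `e`
    by_contra! hgt
    obtain ⟨e, he⟩ : ∃ e, T.entry (r, j) = e + 1 := Nat.exists_eq_add_one.mpr (by omega)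
    have hlat := hT (r, j) hc e
    rw [card_filter_readBefore hc, card_filter_readBefore hc, if_pos he, if_neg (by omega),
      hD.card_filter_entry_eq hle T _ hQ, hD.card_filter_entry_eq hle T _ hQ] at hlat
    have := Finset.card_le_card
      (hD.filter_subset_of_entry_gt hh hle T hc hr hbefore he (by omega))
    omega
  · -- column strictness against the (already forced) cell above
    by_contra! hlt
    have := hle (j - a)
    have habove : (r - 1, j) ∈ D := (hD _ _ (by omega)).mpr ⟨hj, hjn, by omega⟩
    have hforced := hbefore _ habove (Or.inl (by dsimp only; omega))
    have hstrict := T.colStrict (r - 1) j habove (by rwa [Nat.sub_add_cancel (by omega)])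
    rw [Nat.sub_add_cancel (by omega)] at hstrict
    dsimp only at hforced
    omega

theorem entry_add_eq (hT : IsLattice T) (hD : HasColumnsAbove D N a n h) (hh : Monotone h)
    (hle : ∀ i, h i ≤ N) {c : ℕ × ℕ} (hc : c ∈ D) (hr : c.1 < N) :
    T.entry c + (N - c.1) = h (c.2 - a) := by
  -- induction along the reading order, measured by `c.1 * M + (a + n - c.2)`
  set M := a + n + 1
  suffices ∀ m, ∀ c ∈ D, c.1 < N → c.1 * M + (a + n - c.2) < m →
      T.entry c + (N - c.1) = h (c.2 - a) from this _ c hc hr (Nat.lt_succ_self _)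
  intro m
  induction m with
  | zero => intro c _ _ hm; omega
  | succ m ih =>
    rintro ⟨r, j⟩ hc hr hm
    refine hT.entry_add_eq_of_before hD hh hle hc hr fun ⟨r', j'⟩ hc' hrb => ?_
    unfold ReadStrictlyBefore at hrb
    dsimp only at hrb hm ⊢
    have hr' : r' < N := by omega
    obtain ⟨-, hj', -⟩ := (hD r' j' hr').mp hc'
    refine ih _ hc' hr' ?_
    dsimp only
    rcases hrb with hrow | ⟨rfl, hjj'⟩
    · have : (r' + 1) * M ≤ r * M := Nat.mul_le_mul_right M hrow
      rw [Nat.succ_mul] at this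
      omega
    · omega

lemma card_filter_rowLt_entry_eq (hT : IsLattice T) (hD : HasColumnsAbove D N a n h)
    (hh : Monotone h) (hle : ∀ i, h i ≤ N) (w : ℕ) :
    #(D.filter fun c => c.1 < N ∧ T.entry c = w) = #((Finset.range n).filter (w < h ·)) := by
  rw [hD.card_filter_entry_eq hle T _ (fun c hc hr => ⟨hr, hT.entry_add_eq hD hh hle hc hr⟩)]
  exact congrArg _ (Finset.filter_congr fun i _ => by have := hle i; dsimp only; omega)

lemma card_row_entry_le (hT : IsLattice T) (hD : HasColumnsAbove D N a n h) (hh : Monotone h)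
    (hle : ∀ i, h i ≤ N) {j v : ℕ} (hc : (N, j) ∈ D)
    (hrow : ∀ j', (N, j') ∈ D → ∀ i, j ≤ i → i ≤ j' → (N, i) ∈ D)
    (he : T.entry (N, j) = v + 1) :
    #(D.filter fun c => c.1 = N ∧ j ≤ c.2 ∧ T.entry c = v + 1) ≤
      #((Finset.range n).filter (h · = v + 1)) := by
  have hlat := hT (N, j) hc v
  have hnone : #(D.filter fun c => c.1 = N ∧ j ≤ c.2 ∧ T.entry c = v) = 0 := by
    refine Finset.card_eq_zero.mpr (Finset.filter_eq_empty_iff.mpr ?_)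
    rintro ⟨r, j'⟩ hc' ⟨hr, hjj', hv⟩
    dsimp only at hr hjj' hv
    subst hr
    have := T.entry_le_entry_of_row hjj' (hrow j' hc')
    omega
  have hsplit : (Finset.range n).filter (v < h ·) ⊆
      (Finset.range n).filter (v + 1 < h ·) ∪ (Finset.range n).filter (h · = v + 1) := by
    intro i hi
    rw [Finset.mem_filter, Finset.mem_range] at hi
    rw [Finset.mem_union, Finset.mem_filter, Finset.mem_filter, Finset.mem_range]
    omega
  rw [card_filter_readBefore_eq_add, card_filter_readBefore_eq_add, hnone,
    hT.card_filter_rowLt_entry_eq hD hh hle, hT.card_filter_rowLt_entry_eq hD hh hle] at hlat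
  have := (Finset.card_le_card hsplit).trans (Finset.card_union_le _ _)
  omega

end IsLattice

section FirstRowOfFoundation

variable {α : List ℕ} {lam mu : YoungDiagram} {k : ℕ}

lemma hasColumnsAbove_SDiag (hα : ∀ a ∈ α, 0 < a) :
    HasColumnsAbove (SDiag lam mu (rotD (fatStaircase α)) k) α.sum
      (tlCol (lam.cells \ mu.cells) + k) α.length (colHeight α) := by
  intro r j hr
  rw [SDiag, mem_SDiagG_of_lt_ht (by rwa [ht_rotD_fatStaircase hα]), mem_rotD_fatStaircase hα]
  omega

lemma mem_SDiag_sum_iff (hα : ∀ a ∈ α, 0 < a) {j : ℕ} :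
    (α.sum, j) ∈ SDiag lam mu (rotD (fatStaircase α)) k ↔
      mu.rowLen 0 ≤ j ∧ j < lam.rowLen 0 := by
  rw [SDiag, ← ht_rotD_fatStaircase hα, mem_SDiagG_ht, blCol_rotD_fatStaircase hα,
    mem_cells_sdiff, Nat.sub_zero]
  simp

lemma one_add_colHeight_mem_Rset {i : ℕ} (hi : i < α.length) :
    1 + colHeight α i ∈ Rset α k :=
  Or.inl ⟨i + 1, by omega, hi, rfl⟩

lemma card_filter_colHeight_eq_le_one (hα : ∀ a ∈ α, 0 < a) (w : ℕ) :
    #((Finset.range α.length).filter (colHeight α · = w)) ≤ 1 := by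
  refine Finset.card_le_one.mpr fun i hi i' hi' => ?_
  rw [Finset.mem_filter, Finset.mem_range] at hi hi'
  exact (colHeight_strictMonoOn hα).injOn hi.1 hi'.1 (hi.2.trans hi'.2.symm)

lemma col_lt_of_entry_eq_zero (hα : ∀ a ∈ α, 0 < a)
    (hk : lam.rowLen 0 - mu.rowLen 0 - k ≤ α.length)
    (T : SSYT (SDiag lam mu (rotD (fatStaircase α)) k)) {j : ℕ}
    (hc : (α.sum, j) ∈ SDiag lam mu (rotD (fatStaircase α)) k) (he : T.entry (α.sum, j) = 0) :
    j < mu.rowLen 0 + k := by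
  obtain ⟨hj1, hj2⟩ := (mem_SDiag_sum_iff hα).mp hc
  by_contra! hjk
  have hpos := colHeight_pos hα (j := j - (mu.rowLen 0 + k)) (by omega)
  have hsum := colHeight_le_sum α (j - (mu.rowLen 0 + k))
  have habove : (α.sum - 1, j) ∈ SDiag lam mu (rotD (fatStaircase α)) k := by
    rw [hasColumnsAbove_SDiag hα _ _ (by omega), tlCol_cells_sdiff (by omega)]
    omega
  have hstrict := T.colStrict _ _ habove (by rwa [Nat.sub_add_cancel (by omega)])
  rw [Nat.sub_add_cancel (by omega)] at hstrict
  omega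

variable {T : SSYT (SDiag lam mu (rotD (fatStaircase α)) k)}

lemma IsLattice.card_firstRow_entry_le (hα : ∀ a ∈ α, 0 < a) (hT : IsLattice T) {j v : ℕ}
    (hc : (α.sum, j) ∈ SDiag lam mu (rotD (fatStaircase α)) k)
    (he : T.entry (α.sum, j) = v + 1) :
    #((SDiag lam mu (rotD (fatStaircase α)) k).filter
        fun c => c.1 = α.sum ∧ j ≤ c.2 ∧ T.entry c = v + 1) ≤
      #((Finset.range α.length).filter (colHeight α · = v + 1)) := by
  refine hT.card_row_entry_le (hasColumnsAbove_SDiag hα) (colHeight_mono α)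
    (colHeight_le_sum α) hc (fun j' hc' i h1 h2 => ?_) he
  rw [mem_SDiag_sum_iff hα] at hc hc' ⊢
  omega

lemma IsLattice.entry_add_one_mem_Rset (hα : ∀ a ∈ α, 0 < a)
    (hk : lam.rowLen 0 - mu.rowLen 0 - k ≤ α.length) (hT : IsLattice T) {c : ℕ × ℕ}
    (hc : c ∈ SDiag lam mu (rotD (fatStaircase α)) k) (hcN : c.1 = α.sum) :
    T.entry c + 1 ∈ Rset α k := by
  obtain ⟨r, j⟩ := c
  dsimp only at hcN
  subst hcN
  rcases he : T.entry (α.sum, j) with _ | v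
  · have := col_lt_of_entry_eq_zero hα hk T hc he
    have := ((mem_SDiag_sum_iff hα).mp hc).1
    exact Or.inr ⟨rfl, by omega⟩
  · have hself : 0 < #((SDiag lam mu (rotD (fatStaircase α)) k).filter
        fun c => c.1 = α.sum ∧ j ≤ c.2 ∧ T.entry c = v + 1) :=
      Finset.card_pos.mpr ⟨_, Finset.mem_filter.mpr ⟨hc, rfl, le_rfl, he⟩⟩
    obtain ⟨i, hi⟩ := Finset.card_pos.mp (hself.trans_le (hT.card_firstRow_entry_le hα hc he))
    rw [Finset.mem_filter, Finset.mem_range] at hi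
    simpa [hi.2, Nat.add_comm] using one_add_colHeight_mem_Rset (k := k) hi.1

lemma card_filter_entry_eq_zero_le (hα : ∀ a ∈ α, 0 < a)
    (hk : lam.rowLen 0 - mu.rowLen 0 - k ≤ α.length)
    (T : SSYT (SDiag lam mu (rotD (fatStaircase α)) k)) :
    #((SDiag lam mu (rotD (fatStaircase α)) k).filter
        fun c => c.1 = α.sum ∧ T.entry c = 0) ≤ k := by
  calc _ ≤ #(Finset.Ico (mu.rowLen 0) (mu.rowLen 0 + k)) := by
        refine Finset.card_le_card_of_injOn Prod.snd (fun ⟨r, j⟩ hc => ?_) ?_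
        · obtain ⟨hc, hr, he⟩ := Finset.mem_filter.mp hc
          dsimp only at hr he ⊢
          subst hr
          have := col_lt_of_entry_eq_zero hα hk T hc he
          have := ((mem_SDiag_sum_iff hα).mp hc).1
          rw [Finset.mem_coe, Finset.mem_Ico]
          omega
        · intro c hc c' hc' hcc'
          exact Prod.ext
            ((Finset.mem_filter.mp hc).2.1.trans (Finset.mem_filter.mp hc').2.1.symm) hcc'
    _ = k := by simp

lemma IsLattice.card_filter_entry_le_one (hα : ∀ a ∈ α, 0 < a) (hT : IsLattice T) {v : ℕ}
    (hv : 0 < v) :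
    #((SDiag lam mu (rotD (fatStaircase α)) k).filter
        fun c => c.1 = α.sum ∧ T.entry c = v) ≤ 1 := by
  obtain ⟨w, rfl⟩ := Nat.exists_eq_add_one.mpr hv
  refine Finset.card_le_one.mpr fun c hc c' hc' => ?_
  wlog hcc' : c.2 ≤ c'.2 generalizing c c'
  · exact (this c' hc' c hc (by omega)).symm
  obtain ⟨r, j⟩ := c
  obtain ⟨hcD, hr, he⟩ := Finset.mem_filter.mp hc
  obtain ⟨hc'D, hr', he'⟩ := Finset.mem_filter.mp hc'
  dsimp only at hr he hcc'
  subst hr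
  have hcard :=
    (hT.card_firstRow_entry_le hα hcD he).trans (card_filter_colHeight_eq_le_one hα _)
  exact Finset.card_le_one.mp hcard _ (Finset.mem_filter.mpr ⟨hcD, rfl, le_rfl, he⟩) _
    (Finset.mem_filter.mpr ⟨hc'D, hr', hcc', he'⟩)

end FirstRowOfFoundation

theorem firstRow_foundation_mem_Rset_general (α : List ℕ) (hα : ∀ a ∈ α, 0 < a)
    (lam mu : YoungDiagram) (k : ℕ)
    (hk : lam.rowLen 0 - mu.rowLen 0 - k ≤ α.length)
    (T : SSYT (SDiag lam mu (rotD (fatStaircase α)) k)) (hT : IsLattice T) :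
    (∀ c ∈ SDiag lam mu (rotD (fatStaircase α)) k, c.1 = α.sum →
        T.entry c + 1 ∈ Rset α k) ∧
    ((SDiag lam mu (rotD (fatStaircase α)) k).filter
        (fun c => c.1 = α.sum ∧ T.entry c = 0)).card ≤ k ∧
    (∀ v : ℕ, 0 < v →
      ((SDiag lam mu (rotD (fatStaircase α)) k).filter
        (fun c => c.1 = α.sum ∧ T.entry c = v)).card ≤ 1) :=
  ⟨fun _ hc hcN => hT.entry_add_one_mem_Rset hα hk hc hcN,
    card_filter_entry_eq_zero_le hα hk T,
    fun _ hv => hT.card_filter_entry_le_one hα hv⟩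

/-- in a lattice SSYT of shape `S(λ, μ, α^◁; k)`, the entries of the
first row of the foundation take values in `R_{α,k}` (entries here are 0-based,
so the paper's value is `entry + 1`); the value 1 (entry 0) occurs at most `k`
times and every other value at most once. -/
theorem firstRow_foundation_mem_Rset (α : List ℕ) (hα : ∀ a ∈ α, 0 < a) (hne : α ≠ [])
    (lam mu : YoungDiagram) (hsub : mu ≤ lam) (k : ℕ)
    (hk : lam.rowLen 0 - mu.rowLen 0 - k ≤ α.length)
    (T : SSYT (SDiag lam mu (rotD (fatStaircase α)) k)) (hT : IsLattice T) :
    (∀ c ∈ SDiag lam mu (rotD (fatStaircase α)) k, c.1 = α.sum →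
        T.entry c + 1 ∈ Rset α k) ∧
    ((SDiag lam mu (rotD (fatStaircase α)) k).filter
        (fun c => c.1 = α.sum ∧ T.entry c = 0)).card ≤ k ∧
    (∀ v : ℕ, 0 < v →
      ((SDiag lam mu (rotD (fatStaircase α)) k).filter
        (fun c => c.1 = α.sum ∧ T.entry c = v)).card ≤ 1) :=
  firstRow_foundation_mem_Rset_general α hα lam mu k hk T hT
end

section
/- If D is a connected skew diagram with exactly two columns, and these columns have distinct lengths, then D is a sum of fat staircases. -/
open Finset

section AuxFatStaircase

lemma aux_getD_rep (a l v : ℕ) : (List.replicate l a).getD v 0 = if v < l then a else 0 := by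
  induction l generalizing v with
  | zero => simp
  | succ l ih =>
    cases v with
    | zero => simp [List.replicate_succ]
    | succ v =>
      rw [List.replicate_succ, List.getD_cons_succ, ih]
      split_ifs <;> first | rfl | omega

lemma aux_getD_rep_append (a b l m v : ℕ) :
    (List.replicate m a ++ List.replicate l b).getD v 0 =
      if v < m then a else if v < m + l then b else 0 := by
  induction m generalizing v with
  | zero =>
    rw [show List.replicate 0 a = ([] : List ℕ) from rfl, List.nil_append, aux_getD_rep]
    simp
  | succ m ih =>
    cases v with
    | zero => simp [List.replicate_succ]
    | succ v =>
      rw [List.replicate_succ, List.cons_append, List.getD_cons_succ, ih]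
      split_ifs <;> first | rfl | omega

lemma aux_content_apply {D : Diagram} (T : SSYT D) (v : ℕ) :
    content T v = (D.filter (fun c => T.entry c = v)).card := by
  classical
  rw [content, Finsupp.finset_sum_apply, Finset.card_filter]
  exact Finset.sum_congr rfl fun c _ => by rw [Finsupp.single_apply]

lemma aux_rowContent_apply (X : Diagram) (v : ℕ) :
    rowContent X v = (X.filter (fun c => c.1 = v)).card := by
  classical
  rw [rowContent, Finsupp.finset_sum_apply, Finset.card_filter]
  exact Finset.sum_congr rfl fun c _ => by rw [Finsupp.single_apply]

lemma aux_rowContent_diagramOfRows (L : List ℕ) (v : ℕ) :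
    rowContent (diagramOfRows L) v = L.getD v 0 := by
  classical
  rw [aux_rowContent_apply]
  by_cases hv : v < L.length
  · have hf : (diagramOfRows L).filter (fun c => c.1 = v) =
        (Finset.range (L.getD v 0)).image (fun j => (v, j)) := by
      ext ⟨i, j⟩
      simp only [diagramOfRows, Finset.mem_filter, Finset.mem_biUnion, Finset.mem_image,
        Finset.mem_range, Prod.mk.injEq]
      constructor
      · rintro ⟨⟨a, ha, b, hb, rfl, rfl⟩, rfl⟩
        exact ⟨b, hb, rfl, rfl⟩
      · rintro ⟨b, hb, rfl, rfl⟩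
        exact ⟨⟨v, hv, b, hb, rfl, rfl⟩, rfl⟩
    rw [hf, Finset.card_image_of_injective _ (fun a b h => by simpa using h),
      Finset.card_range]
  · have hf : (diagramOfRows L).filter (fun c => c.1 = v) = ∅ := by
      rw [Finset.filter_eq_empty_iff]
      rintro ⟨i, j⟩ hc
      simp only [diagramOfRows, Finset.mem_biUnion, Finset.mem_image, Finset.mem_range,
        Prod.mk.injEq] at hc
      obtain ⟨a, ha, b, hb, rfl, rfl⟩ := hc
      omega
    rw [hf]
    have : L.length ≤ v := by omega
    simp [List.getD_eq_getElem?_getD, List.getElem?_eq_none this]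

lemma aux_staircase_one (n : ℕ) : staircaseRows [n] = List.replicate n 1 := by
  simp [staircaseRows, List.range_succ]

lemma aux_staircase_two (l m : ℕ) :
    staircaseRows [l, m] = List.replicate m 2 ++ List.replicate l 1 := by
  simp [staircaseRows, List.range_succ]

end AuxFatStaircase

/-- a connected skew diagram with exactly two columns of distinct
lengths is a sum of fat staircases. -/
theorem two_distinct_columns_sumOfFatStaircases (D : Diagram) (hD : IsSkewDiagram D)
    (hconn : ConnectedDiagram D) (hcols : (D.image Prod.snd).card = 2)
    (hdist : ∀ j1 ∈ D.image Prod.snd, ∀ j2 ∈ D.image Prod.snd, j1 ≠ j2 →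
      colLenAt D j1 ≠ colLenAt D j2) :
    IsSumOfFatStaircases D := by
  classical
  obtain ⟨lam, mu, hlemu, hDeq⟩ := hD
  intro d hd
  obtain ⟨⟨T, hlat, hcont⟩⟩ : Nonempty {T : SSYT D // IsLattice T ∧ content T = d} :=
    (Nat.card_ne_zero.mp hd).1
  subst hcont
  set d := content T with hdset
  -- basic facts
  have hDmem : ∀ c : ℕ × ℕ, c ∈ D ↔ c ∈ lam ∧ c ∉ mu := by
    intro c
    rw [hDeq, Finset.mem_sdiff, YoungDiagram.mem_cells, YoungDiagram.mem_cells]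
  -- strict increase along columns
  have hstrictk : ∀ k i j, (i, j) ∈ D → (i + k + 1, j) ∈ D →
      T.entry (i, j) < T.entry (i + k + 1, j) := by
    intro k
    induction k with
    | zero => exact fun i j h1 h2 => T.colStrict i j h1 h2
    | succ k ih =>
      intro i j h1 h2
      have hmid : (i + 1, j) ∈ D := by
        rw [hDmem] at h1 h2 ⊢
        refine ⟨lam.up_left_mem (by omega) le_rfl h2.1, fun hmu => h1.2 ?_⟩
        exact mu.up_left_mem (by omega) le_rfl hmu
      have h2' : (i + 1 + k + 1, j) ∈ D := by
        have : i + 1 + k + 1 = i + (k + 1) + 1 := by omega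
        rw [this]; exact h2
      have := ih (i + 1) j hmid h2'
      have h3 : i + 1 + k + 1 = i + (k + 1) + 1 := by omega
      rw [h3] at this
      exact (T.colStrict i j h1 hmid).trans this
  have hstrict : ∀ c ∈ D, ∀ c' ∈ D, c.2 = c'.2 → T.entry c = T.entry c' → c = c' := by
    rintro ⟨i, j⟩ h1 ⟨i', j'⟩ h2 hj he
    dsimp at hj; subst hj
    rcases Nat.lt_trichotomy i i' with h | h | h
    · obtain ⟨k, rfl⟩ : ∃ k, i' = i + k + 1 := ⟨i' - i - 1, by omega⟩
      exact absurd he (Nat.ne_of_lt (hstrictk _ i j h1 h2))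
    · rw [h]
    · obtain ⟨k, rfl⟩ : ∃ k, i = i' + k + 1 := ⟨i - i' - 1, by omega⟩
      exact absurd he.symm (Nat.ne_of_lt (hstrictk _ i' j h2 h1))
  have hdapp : ∀ v, d v = (D.filter (fun c => T.entry c = v)).card :=
    aux_content_apply T
  -- each value occurs at most twice
  have hinj : ∀ v : ℕ, Set.InjOn Prod.snd (↑(D.filter (fun c => T.entry c = v)) : Set (ℕ × ℕ)) := by
    intro v c hc c' hc' hcc
    simp only [Finset.coe_filter, Set.mem_setOf_eq] at hc hc'
    exact hstrict c hc.1 c' hc'.1 hcc (hc.2.trans hc'.2.symm)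
  have hle2 : ∀ v, d v ≤ 2 := by
    intro v
    rw [hdapp, ← hcols]
    exact Finset.card_le_card_of_injOn Prod.snd
      (fun c hc => Finset.mem_image_of_mem _ (Finset.mem_of_mem_filter c hc)) (hinj v)
  -- the final cell of the reading word
  have hDne : D.Nonempty := by
    rw [← Finset.image_nonempty (f := Prod.snd)]
    exact Finset.card_pos.mp (by omega)
  obtain ⟨c0, hc0, hc0sup⟩ := Finset.exists_mem_eq_sup D hDne (fun c => c.1)
  set i0 := D.sup (fun c => c.1) with hi0
  have hrowne : (D.filter (fun c => c.1 = i0)).Nonempty :=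
    ⟨c0, Finset.mem_filter.mpr ⟨hc0, hc0sup.symm⟩⟩
  obtain ⟨cm, hcmmem, hcmmin⟩ :=
    Finset.exists_min_image (D.filter (fun c => c.1 = i0)) Prod.snd hrowne
  have hcmD : cm ∈ D := Finset.mem_of_mem_filter cm hcmmem
  have hcm1 : cm.1 = i0 := (Finset.mem_filter.mp hcmmem).2
  have hread : ∀ c' ∈ D, ReadBefore c' cm := by
    intro c' hc'
    have hle : c'.1 ≤ i0 := Finset.le_sup (f := fun c => c.1) hc'
    rcases Nat.lt_or_ge c'.1 i0 with h | h
    · exact Or.inl (by omega)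
    · have h1 : c'.1 = i0 := le_antisymm hle h
      exact Or.inr ⟨by omega, hcmmin c' (Finset.mem_filter.mpr ⟨hc', h1⟩)⟩
  -- the content is weakly decreasing
  have hanti1 : ∀ v, d (v + 1) ≤ d v := by
    intro v
    have h := hlat cm hcmD v
    have he : ∀ w : ℕ, D.filter (fun c' => ReadBefore c' cm ∧ T.entry c' = w) =
        D.filter (fun c' => T.entry c' = w) := by
      intro w
      apply Finset.filter_congr
      intro c hc
      simp [hread c hc]
    rw [he, he] at h
    rw [hdapp, hdapp]
    exact h
  have hanti : ∀ v w : ℕ, v ≤ w → d w ≤ d v :=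
    fun v w h => antitone_nat_of_succ_le hanti1 h
  -- some value occurs exactly once
  have hone : ∃ v, d v = 1 := by
    by_contra hno
    push_neg at hno
    obtain ⟨j1, hj1, j2, hj2, hj12⟩ := Finset.one_lt_card.mp (by omega :
      1 < (D.image Prod.snd).card)
    have key : ∀ j ∈ D.image Prod.snd, ∀ j' ∈ D.image Prod.snd,
        (D.filter (fun c => c.2 = j)).image T.entry ⊆
        (D.filter (fun c => c.2 = j')).image T.entry := by
      intro j hj j' hj' v hv
      obtain ⟨c, hc, rfl⟩ := Finset.mem_image.mp hv
      have hcD : c ∈ D := Finset.mem_of_mem_filter c hc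
      set v := T.entry c with hvdef
      have hd1 : 1 ≤ d v := by
        rw [hdapp]
        exact Finset.card_pos.mpr ⟨c, Finset.mem_filter.mpr ⟨hcD, rfl⟩⟩
      have hd2 : d v = 2 := by
        have := hle2 v
        have := hno v
        omega
      -- the two cells with entry v occupy both columns
      have hsub : (D.filter (fun c => T.entry c = v)).image Prod.snd ⊆
          D.image Prod.snd := Finset.image_subset_image (Finset.filter_subset _ _)
      have hcard : ((D.filter (fun c => T.entry c = v)).image Prod.snd).card =
          (D.image Prod.snd).card := by
        rw [Finset.card_image_of_injOn (hinj v), hcols, ← hd2, hdapp]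
      have heq : (D.filter (fun c => T.entry c = v)).image Prod.snd =
          D.image Prod.snd := Finset.eq_of_subset_of_card_le hsub (le_of_eq hcard.symm)
      have : j' ∈ (D.filter (fun c => T.entry c = v)).image Prod.snd := heq ▸ hj'
      obtain ⟨c', hc', hc'2⟩ := Finset.mem_image.mp this
      have hc'D : c' ∈ D := Finset.mem_of_mem_filter c' hc'
      have hc've : T.entry c' = v := (Finset.mem_filter.mp hc').2
      exact Finset.mem_image.mpr ⟨c', Finset.mem_filter.mpr ⟨hc'D, hc'2⟩, hc've⟩
    have himg : (D.filter (fun c => c.2 = j1)).image T.entry =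
        (D.filter (fun c => c.2 = j2)).image T.entry :=
      Finset.Subset.antisymm (key j1 hj1 j2 hj2) (key j2 hj2 j1 hj1)
    have hinjcol : ∀ j : ℕ, Set.InjOn T.entry (↑(D.filter (fun c => c.2 = j)) : Set (ℕ × ℕ)) := by
      intro j c hc c' hc' hcc
      simp only [Finset.coe_filter, Set.mem_setOf_eq] at hc hc'
      exact hstrict c hc.1 c' hc'.1 (hc.2.trans hc'.2.symm) hcc
    have hcl : colLenAt D j1 = colLenAt D j2 := by
      unfold colLenAt
      rw [← Finset.card_image_of_injOn (hinjcol j1), ← Finset.card_image_of_injOn (hinjcol j2),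
        himg]
    exact hdist j1 hj1 j2 hj2 hj12 hcl
  obtain ⟨v0, hv0⟩ := hone
  -- the thresholds
  have hNex : ∃ N, d N = 0 := by
    refine ⟨d.support.sup id + 1, ?_⟩
    by_contra h
    have h1 : d.support.sup id + 1 ∈ d.support := Finsupp.mem_support_iff.mpr h
    have h2 := Finset.le_sup (f := id) h1
    simp only [id] at h2
    omega
  set n := sInf {v | d v = 0} with hn
  set m := sInf {v | d v ≤ 1} with hm
  have hn0 : d n = 0 := Nat.sInf_mem hNex
  have hnle : ∀ v, d v = 0 → n ≤ v := fun v hv =>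
    Nat.sInf_le (show v ∈ {v | d v = 0} from hv)
  have hmle : ∀ v, d v ≤ 1 → m ≤ v := fun v hv =>
    Nat.sInf_le (show v ∈ {v | d v ≤ 1} from hv)
  have hm1 : d m ≤ 1 :=
    Nat.sInf_mem (⟨n, show d n ≤ 1 by omega⟩ : {v | d v ≤ 1}.Nonempty)
  have hmv0 : m ≤ v0 := hmle v0 (by omega)
  have hv0n : v0 < n := by
    by_contra h
    push_neg at h
    have := hanti n v0 h
    omega
  have hmn : m < n := lt_of_le_of_lt hmv0 hv0n
  have hval2 : ∀ v, v < m → d v = 2 := by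
    intro v hv
    have h2 := hle2 v
    have h3 : ¬ d v ≤ 1 := fun h' => absurd (hmle v h') (by omega)
    omega
  have hval1 : ∀ v, m ≤ v → v < n → d v = 1 := by
    intro v h1 h2
    have hle := (hanti m v h1).trans hm1
    have h3 : d v ≠ 0 := fun h0 => absurd (hnle v h0) (by omega)
    omega
  have hval0 : ∀ v, n ≤ v → d v = 0 := by
    intro v h
    have := hanti n v h
    omega
  -- build the fat staircase
  by_cases hm0 : m = 0
  · refine ⟨[n], ?_, ?_⟩
    · intro a ha
      simp only [List.mem_singleton] at ha
      omega
    · apply Finsupp.ext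
      intro v
      rw [fatStaircase, aux_staircase_one, aux_rowContent_diagramOfRows, aux_getD_rep]
      rcases Nat.lt_or_ge v n with h | h
      · rw [if_pos h]; exact hval1 v (by omega) h
      · rw [if_neg (by omega)]; exact hval0 v h
  · refine ⟨[n - m, m], ?_, ?_⟩
    · intro a ha
      simp only [List.mem_cons, List.mem_singleton] at ha
      rcases ha with rfl | rfl | h
      · omega
      · omega
      · simp at h
    · apply Finsupp.ext
      intro v
      rw [fatStaircase, aux_staircase_two, aux_rowContent_diagramOfRows, aux_getD_rep_append]
      rcases Nat.lt_or_ge v m with h | h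
      · rw [if_pos h]; exact hval2 v h
      · rcases Nat.lt_or_ge v n with h2 | h2
        · rw [if_neg (by omega), if_pos (by omega)]
          exact hval1 v (by omega) h2
        · rw [if_neg (by omega), if_neg (by omega)]
          exact hval0 v h2
end
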